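/- Let N ≥ 1 and q > 0. There exists a constant c > 0 depending only on q such that for all u, v ∈ ℝ^N one has 𝔟[u,v] ≤ c·(|u| + |v|)^q·|u − v|. -/

import Mathlib

/-!
Since `⟪u^{⟨q⟩}, u⟫ = |u|^{q+1}`, the boundary term splits as
`𝔟[u,v] = (|v|^{q+1} - |u|^{q+1}) / (q+1) + ⟪u^{⟨q⟩}, u - v⟫`.
The second summand is at most `|u|^q |u - v|` by Cauchy–Schwarz, and the first is at most
`max(|u|,|v|)^q · | |v| - |u| |` by convexity of `t ↦ t^{q+1}`; hence `c = 2` works.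
-/

/-- For `α > 0` and a vector `u`, the power `u^{⟨α⟩} := ‖u‖^(α-1) • u` (with `0^{⟨α⟩} = 0`). -/
noncomputable def vpow {E : Type*} [NormedAddCommGroup E] [NormedSpace ℝ E] (α : ℝ) (u : E) : E :=
  (‖u‖ ^ (α - 1)) • u

/-- The boundary term `𝔟[u,v] := (1/(q+1))|v|^{q+1} + (q/(q+1))|u|^{q+1} − u^{⟨q⟩}·v`. -/
noncomputable def bterm {E : Type*} [NormedAddCommGroup E] [InnerProductSpace ℝ E]
    (q : ℝ) (u v : E) : ℝ :=
  (1 / (q + 1)) * ‖v‖ ^ (q + 1) + (q / (q + 1)) * ‖u‖ ^ (q + 1) - (inner ℝ (vpow q u) v : ℝ)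

open Real

lemma rpow_sub_rpow_le_mul_sub {p a b : ℝ} (hp : 1 ≤ p) (ha : 0 ≤ a) (hab : a ≤ b) :
    b ^ p - a ^ p ≤ p * b ^ (p - 1) * (b - a) := by
  rcases hab.eq_or_lt with rfl | hab
  · simp
  have hb : 0 < b := ha.trans_lt hab
  have hderiv : HasDerivWithinAt (fun t : ℝ => t ^ p) (p * b ^ (p - 1)) (Set.Ici 0) b :=
    (hasDerivAt_rpow_const (Or.inl hb.ne')).hasDerivWithinAt
  have hslope := (convexOn_rpow hp).slope_le_of_hasDerivWithinAt ha hb.le hab hderiv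
  rw [slope_def_field, div_le_iff₀ (sub_pos.mpr hab)] at hslope
  exact hslope

lemma rpow_add_one_sub_rpow_add_one_le {q a b : ℝ} (hq : 0 ≤ q) (ha : 0 ≤ a) (hb : 0 ≤ b) :
    b ^ (q + 1) - a ^ (q + 1) ≤ (q + 1) * (a + b) ^ q * |b - a| := by
  have hrhs : 0 ≤ (q + 1) * (a + b) ^ q * |b - a| := by positivity
  rcases le_total b a with hba | hab
  · linarith [rpow_le_rpow hb hba (by linarith : 0 ≤ q + 1)]
  calc b ^ (q + 1) - a ^ (q + 1) ≤ (q + 1) * b ^ q * (b - a) := by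
        simpa using rpow_sub_rpow_le_mul_sub (by linarith : 1 ≤ q + 1) ha hab
    _ ≤ (q + 1) * (a + b) ^ q * |b - a| := by
        gcongr
        · linarith
        · exact le_abs_self _

section InnerProductSpace

variable {E : Type*} [NormedAddCommGroup E] [InnerProductSpace ℝ E]

lemma norm_vpow {α : ℝ} (hα : α ≠ 0) (u : E) : ‖vpow α u‖ = ‖u‖ ^ α := by
  rcases eq_or_ne u 0 with rfl | hu
  · simp [vpow, zero_rpow hα]
  rw [vpow, norm_smul, norm_of_nonneg (by positivity), ← rpow_add_one (norm_ne_zero_iff.mpr hu),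
    sub_add_cancel]

lemma inner_vpow_self {α : ℝ} (hα : α + 1 ≠ 0) (u : E) :
    inner ℝ (vpow α u) u = ‖u‖ ^ (α + 1) := by
  rcases eq_or_ne u 0 with rfl | hu
  · simp [vpow, zero_rpow hα]
  have hu' : ‖u‖ ≠ 0 := norm_ne_zero_iff.mpr hu
  rw [vpow, real_inner_smul_left, real_inner_self_eq_norm_sq, sq, ← mul_assoc,
    ← rpow_add_one hu', ← rpow_add_one hu']
  ring_nf

lemma bterm_eq {q : ℝ} (hq : q + 1 ≠ 0) (u v : E) :
    bterm q u v = (‖v‖ ^ (q + 1) - ‖u‖ ^ (q + 1)) / (q + 1) + inner ℝ (vpow q u) (u - v) := by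
  rw [bterm, inner_sub_right, inner_vpow_self hq]
  field_simp
  ring

lemma inner_vpow_sub_le {q : ℝ} (hq : q ≠ 0) (u v : E) :
    inner ℝ (vpow q u) (u - v) ≤ ‖u‖ ^ q * ‖u - v‖ :=
  norm_vpow hq u ▸ real_inner_le_norm _ _

lemma bterm_le {q : ℝ} (hq : 0 < q) (u v : E) :
    bterm q u v ≤ 2 * (‖u‖ + ‖v‖) ^ q * ‖u - v‖ := by
  have hq1 : 0 < q + 1 := by linarith
  have hradial : (‖v‖ ^ (q + 1) - ‖u‖ ^ (q + 1)) / (q + 1) ≤ (‖u‖ + ‖v‖) ^ q * ‖u - v‖ := by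
    rw [div_le_iff₀ hq1]
    calc ‖v‖ ^ (q + 1) - ‖u‖ ^ (q + 1) ≤ (q + 1) * (‖u‖ + ‖v‖) ^ q * |‖v‖ - ‖u‖| :=
          rpow_add_one_sub_rpow_add_one_le hq.le (norm_nonneg u) (norm_nonneg v)
      _ ≤ (q + 1) * (‖u‖ + ‖v‖) ^ q * ‖u - v‖ := by
          gcongr
          rw [norm_sub_rev]
          exact abs_norm_sub_norm_le v u
      _ = _ := by ring
  have hangular : inner ℝ (vpow q u) (u - v) ≤ (‖u‖ + ‖v‖) ^ q * ‖u - v‖ :=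
    (inner_vpow_sub_le hq.ne' u v).trans <| by
      gcongr
      exact le_add_of_nonneg_right (norm_nonneg v)
  rw [bterm_eq hq1.ne']
  linarith

end InnerProductSpace

/-- There exists a constant `c > 0`, depending only on `q > 0`, such that for all `N ≥ 1` and
all `u, v ∈ ℝ^N`: `𝔟[u,v] ≤ c·(|u| + |v|)^q·|u − v|`. -/
theorem stmt4 (q : ℝ) (hq : 0 < q) :
    ∃ c : ℝ, 0 < c ∧ ∀ (N : ℕ), 1 ≤ N → ∀ u v : EuclideanSpace ℝ (Fin N),
      bterm q u v ≤ c * (‖u‖ + ‖v‖) ^ q * ‖u - v‖ :=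
  ⟨2, two_pos, fun _ _ u v => bterm_le hq u v⟩
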